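/- Let R = ℂ[x,y,z]/(x²z − y² + 1) be the coordinate ring of the second Danielewski surface Y. Then Ω_{R/ℂ} is a free R-module of rank 2; in particular the relation 2xz·dx + x²·dz − 2y·dy = 0 holds in Ω_{R/ℂ} and Ω_{R/ℂ} admits an R-basis of two elements. -/

import Mathlib

/-!
On `Y` we have `y² − x²z = 1`, so the coefficient vector `(2xz, −2y, x²)` of the single relation
`d(x²z − y² + 1) = 0` among `dx, dy, dz` is unimodular, split by the form `(0, −y/2, −z)`.
Hence `Ω_{R/ℂ} ≅ R³ / R·(2xz, −2y, x²)` is isomorphic to the kernel of that form, which is free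
on `(1, 0, 0)` and `(0, −2z, y)`. Concretely `dx` and `ω = −2z·dy + y·dz` form a basis; the
coordinate map `Ω_{R/ℂ} → R²` is induced by the derivation sending `x, y, z` to the coordinates
`(1, 0)`, `(xyz, x²/2)`, `(2xz², y)` of `dx, dy, dz` in that basis.
-/

open MvPolynomial

/-- The defining polynomial `x²z − y² + 1` of the second Danielewski surface `Y`. -/
noncomputable def gY : MvPolynomial (Fin 3) ℂ := X 0 ^ 2 * X 2 - X 1 ^ 2 + 1

/-- The coordinate ring `R = ℂ[x,y,z]/(x²z − y² + 1)` of `Y`. -/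
abbrev RY := MvPolynomial (Fin 3) ℂ ⧸ Ideal.span {gY}

noncomputable def mkY : MvPolynomial (Fin 3) ℂ →+* RY := Ideal.Quotient.mk _

namespace Derivation

variable {A P M : Type*} [CommRing A] [CommRing P] [Algebra A P] {I : Ideal P}
  [AddCommGroup M] [Module A M] [Module P M] [Module (P ⧸ I) M] [IsScalarTower P (P ⧸ I) M]

theorem map_eq_zero_of_mem_span (D : Derivation A P M) {s : Set P} (hsI : s ⊆ I)
    (hs : ∀ g ∈ s, D g = 0) {p : P} (hp : p ∈ Ideal.span s) : D p = 0 := by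
  induction hp using Submodule.span_induction with
  | mem g hg => exact hs g hg
  | zero => exact D.map_zero
  | add p q _ _ hp hq => rw [D.map_add, hp, hq, add_zero]
  | smul a p hmem hp =>
    rw [smul_eq_mul, D.leibniz, hp, smul_zero, zero_add, ← algebraMap_smul (P ⧸ I),
      Ideal.Quotient.algebraMap_eq,
      Ideal.Quotient.eq_zero_iff_mem.mpr (Ideal.span_le.mpr hsI hmem), zero_smul]

def liftQuotient (D : Derivation A P M) (hD : ∀ p ∈ I, D p = 0) : Derivation A (P ⧸ I) M where
  toLinearMap := (Submodule.liftQ (I.restrictScalars A) D.toLinearMap hD).comp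
    (Submodule.Quotient.restrictScalarsEquiv A I).symm.toLinearMap
  map_one_eq_zero' := D.map_one_eq_zero
  leibniz' := by
    rintro ⟨p⟩ ⟨q⟩
    show D (p * q) = Ideal.Quotient.mk I p • D q + Ideal.Quotient.mk I q • D p
    rw [D.leibniz, ← Ideal.Quotient.algebraMap_eq, algebraMap_smul, algebraMap_smul]

@[simp]
theorem liftQuotient_mk (D : Derivation A P M) (hD : ∀ p ∈ I, D p = 0) (p : P) :
    D.liftQuotient hD (Ideal.Quotient.mk I p) = D p :=
  rfl

end Derivation

theorem MvPolynomial.adjoin_range_quotient_mk_X {σ R : Type*} [CommRing R]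
    (I : Ideal (MvPolynomial σ R)) :
    Algebra.adjoin R (Set.range fun i ↦ Ideal.Quotient.mk I (X i)) = ⊤ := by
  rw [← Ideal.Quotient.mkₐ_eq_mk R, Set.range_comp', ← AlgHom.map_adjoin, adjoin_range_X,
    Algebra.map_top, AlgHom.range_eq_top]
  exact Ideal.Quotient.mkₐ_surjective R I

theorem LinearMap.comp_liftKaehlerDifferential_eq_id {R S M : Type*} [CommRing R] [CommRing S]
    [Algebra R S] [AddCommGroup M] [Module R M] [Module S M] [IsScalarTower R S M] {s : Set S}
    (hs : Algebra.adjoin R s = ⊤) (δ : Derivation R S M) (f : M →ₗ[S] Ω[S⁄R])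
    (h : ∀ a ∈ s, f (δ a) = KaehlerDifferential.D R S a) :
    f ∘ₗ δ.liftKaehlerDifferential = LinearMap.id := by
  refine Derivation.liftKaehlerDifferential_unique _ _ (Derivation.ext_of_adjoin_eq_top _ hs ?_)
  intro a ha
  simpa using h a ha

namespace Danielewski

local notation "𝐱" => mkY (X 0)
local notation "𝐲" => mkY (X 1)
local notation "𝐳" => mkY (X 2)
local notation "d" => KaehlerDifferential.D ℂ RY

theorem y_sq_sub_x_sq_mul_z : 𝐲 ^ 2 - 𝐱 ^ 2 * 𝐳 = 1 := by
  have hg : mkY gY = 0 := Ideal.Quotient.eq_zero_iff_mem.mpr (Ideal.mem_span_singleton_self gY)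
  simp only [gY, map_add, map_sub, map_mul, map_pow, map_one] at hg
  linear_combination -hg

theorem two_mul_algebraMap_half : (2 : RY) * algebraMap ℂ RY 2⁻¹ = 1 := by
  rw [← map_ofNat (algebraMap ℂ RY) 2, ← map_mul, mul_inv_cancel₀ two_ne_zero, map_one]

theorem d_relation : (2 * 𝐱 * 𝐳) • d 𝐱 + 𝐱 ^ 2 • d 𝐳 - (2 * 𝐲) • d 𝐲 = 0 := by
  have h := congrArg d y_sq_sub_x_sq_mul_z
  simp only [map_sub, Derivation.leibniz, Derivation.leibniz_pow, Derivation.map_one_eq_zero] at h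
  linear_combination (norm := module) -h

noncomputable def ω : Ω[RY⁄ℂ] := (-(2 * 𝐳)) • d 𝐲 + 𝐲 • d 𝐳

noncomputable def basisFamily : Fin 2 → Ω[RY⁄ℂ] := ![d 𝐱, ω]

noncomputable def coords : Fin 3 → Fin 2 → RY :=
  ![![1, 0], ![𝐱 * 𝐲 * 𝐳, algebraMap ℂ RY 2⁻¹ * 𝐱 ^ 2], ![2 * 𝐱 * 𝐳 ^ 2, 𝐲]]

noncomputable def coordDerivationPoly : Derivation ℂ (MvPolynomial (Fin 3) ℂ) (Fin 2 → RY) :=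
  mkDerivation ℂ coords

theorem smul_coords_eq_mkY_smul (p : MvPolynomial (Fin 3) ℂ) (v : Fin 2 → RY) :
    p • v = mkY p • v :=
  (algebraMap_smul RY p v).symm

theorem coordDerivationPoly_gY : coordDerivationPoly gY = 0 := by
  simp only [coordDerivationPoly, gY, map_add, map_sub, Derivation.leibniz,
    Derivation.leibniz_pow, Derivation.map_one_eq_zero, mkDerivation_X, smul_coords_eq_mkY_smul]
  funext i
  fin_cases i <;> simp only [coords, Fin.isValue, Fin.zero_eta, Fin.mk_one, map_pow,
    Matrix.cons_val, Matrix.cons_val_zero, Matrix.cons_val_one, Matrix.cons_val_fin_one,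
    Matrix.head_cons, Matrix.tail_cons, Matrix.smul_cons, Matrix.smul_empty, Matrix.add_cons,
    Matrix.sub_cons, Matrix.empty_add_empty, Matrix.zero_empty, Pi.add_apply, Pi.zero_apply,
    smul_eq_mul, nsmul_eq_mul, Nat.cast_ofNat, Nat.add_one_sub_one, pow_one,
    mul_one, mul_zero, add_zero, sub_self]
  · linear_combination (-2 * 𝐱 * 𝐳) * y_sq_sub_x_sq_mul_z
  · linear_combination (-𝐱 ^ 2 * 𝐲) * two_mul_algebraMap_half

noncomputable def coordDerivation : Derivation ℂ RY (Fin 2 → RY) :=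
  coordDerivationPoly.liftQuotient fun _ ↦
    coordDerivationPoly.map_eq_zero_of_mem_span
      (Set.singleton_subset_iff.mpr (Ideal.mem_span_singleton_self gY))
      (by simp [coordDerivationPoly_gY])

theorem coordDerivation_mkY_X (i : Fin 3) : coordDerivation (mkY (X i)) = coords i :=
  (coordDerivationPoly.liftQuotient_mk _ (X i)).trans (mkDerivation_X ℂ coords i)

noncomputable def toCoords : Ω[RY⁄ℂ] →ₗ[RY] Fin 2 → RY := coordDerivation.liftKaehlerDifferential

noncomputable def ofCoords : (Fin 2 → RY) →ₗ[RY] Ω[RY⁄ℂ] :=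
  Fintype.linearCombination RY basisFamily

theorem toCoords_d (a : RY) : toCoords (d a) = coordDerivation a :=
  coordDerivation.liftKaehlerDifferential_comp_D a

theorem ofCoords_coords (i : Fin 3) : ofCoords (coords i) = d (mkY (X i)) := by
  simp only [ofCoords, Fintype.linearCombination_apply, Fin.sum_univ_two, basisFamily, ω]
  fin_cases i <;> simp only [coords, Fin.isValue, Fin.zero_eta, Fin.mk_one, Fin.reduceFinMk,
    Matrix.cons_val', Matrix.cons_val_zero, Matrix.cons_val_fin_one, Matrix.cons_val_one,
    Matrix.cons_val, smul_add, one_smul]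
  · module
  · linear_combination (norm := module) (algebraMap ℂ RY 2⁻¹ * 𝐲) • d_relation +
      two_mul_algebraMap_half • ((-(𝐱 * 𝐲 * 𝐳)) • d 𝐱 + d 𝐲) +
      y_sq_sub_x_sq_mul_z • ((2 * algebraMap ℂ RY 2⁻¹) • d 𝐲)
  · linear_combination (norm := module) 𝐳 • d_relation + y_sq_sub_x_sq_mul_z • d 𝐳

theorem toCoords_basisFamily (j : Fin 2) : toCoords (basisFamily j) = Pi.single j 1 := by
  funext k
  fin_cases j <;> fin_cases k <;> simp only [basisFamily, ω, toCoords_d, coordDerivation_mkY_X,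
    coords, Fin.isValue, Fin.zero_eta, Fin.mk_one, map_add, map_smul, neg_smul, smul_eq_mul,
    Matrix.cons_val, Matrix.cons_val', Matrix.cons_val_zero, Matrix.cons_val_one,
    Matrix.cons_val_fin_one, Matrix.smul_cons, Matrix.smul_empty, Matrix.neg_cons,
    Matrix.neg_empty, Pi.add_apply, Pi.single_eq_same, Pi.single_eq_of_ne, ne_eq, one_ne_zero,
    zero_ne_one, not_false_eq_true]
  · ring
  · linear_combination y_sq_sub_x_sq_mul_z - 𝐳 * 𝐱 ^ 2 * two_mul_algebraMap_half

theorem ofCoords_comp_toCoords : ofCoords ∘ₗ toCoords = LinearMap.id :=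
  LinearMap.comp_liftKaehlerDifferential_eq_id (adjoin_range_quotient_mk_X _) _ _ <| by
    rintro _ ⟨i, rfl⟩
    exact (congrArg ofCoords (coordDerivation_mkY_X i)).trans (ofCoords_coords i)

theorem toCoords_comp_ofCoords : toCoords ∘ₗ ofCoords = LinearMap.id :=
  (Pi.basisFun RY (Fin 2)).ext fun j ↦ by
    simpa [ofCoords, Fintype.linearCombination_apply_single] using toCoords_basisFamily j

noncomputable def kaehlerBasis : Module.Basis (Fin 2) RY Ω[RY⁄ℂ] :=
  (Pi.basisFun RY (Fin 2)).map
    (LinearEquiv.ofLinearMap ofCoords toCoords ofCoords_comp_toCoords toCoords_comp_ofCoords)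

end Danielewski

/-- For `R = ℂ[x,y,z]/(x²z − y² + 1)`, the Kähler differentials `Ω_{R/ℂ}` satisfy
the relation `2xz·dx + x²·dz − 2y·dy = 0` and form a free `R`-module of rank 2. -/
theorem kaehler_RY_free_rank_two :
    ((2 * mkY (X 0) * mkY (X 2)) • (KaehlerDifferential.D ℂ RY) (mkY (X 0)) +
      (mkY (X 0) ^ 2) • (KaehlerDifferential.D ℂ RY) (mkY (X 2)) -
      (2 * mkY (X 1)) • (KaehlerDifferential.D ℂ RY) (mkY (X 1)) = 0) ∧
    Nonempty (Module.Basis (Fin 2) RY (Ω[RY⁄ℂ])) :=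
  ⟨Danielewski.d_relation, ⟨Danielewski.kaehlerBasis⟩⟩
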